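/- arXiv:2101.07480 — 3 statements merged into one kernel-verified Lean document; each statement's English description precedes it below -/
import Mathlib

section
/- Overlapness satisfies the Sizes of Hyperedges axiom: if E = {e_1,…,e_n} and E' = {e'_1,…,e'_n} are two families of hyperedges with the same (positive) number of distinct nodes in their unions, |e_i| < |e'_i| for some index i, and |e_j| ≤ |e'_j| for all j ≠ i, then o(E) < o(E'). -/
/-- Overlapness of an indexed family of hyperedges. -/
noncomputable def overlapnessIdx {α : Type*} [DecidableEq α] {n : ℕ}
    (e : Fin n → Finset α) : ℝ :=
  (∑ i, ((e i).card : ℝ)) / ((Finset.univ.biUnion e).card : ℝ)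

/-- Overlapness satisfies the Sizes of Hyperedges axiom. -/
theorem overlapness_sizes_of_hyperedges {α : Type*} [DecidableEq α] {n : ℕ}
    (e e' : Fin n → Finset α)
    (hunion : (Finset.univ.biUnion e).card = (Finset.univ.biUnion e').card)
    (hpos : 0 < (Finset.univ.biUnion e).card)
    (i : Fin n) (hi : (e i).card < (e' i).card)
    (hle : ∀ j, j ≠ i → (e j).card ≤ (e' j).card) :
    overlapnessIdx e < overlapnessIdx e' := by
  unfold overlapnessIdx
  rw [← hunion]
  apply div_lt_div_of_pos_right _ (by exact_mod_cast hpos)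
  apply Finset.sum_lt_sum (fun j _ => ?_) ⟨i, Finset.mem_univ i, by exact_mod_cast hi⟩
  by_cases h : j = i
  · subst h; exact_mod_cast hi.le
  · exact_mod_cast hle j h
end

section
/- The density measure ρ fails the Sizes of Hyperedges axiom: there exist two families of hyperedges E = {e_1,…,e_n} and E' = {e'_1,…,e'_n} with the same number of hyperedges and the same number of distinct nodes in their unions, with |e_i| ≤ |e'_i| for all i and strict inequality for at least one i, such that ρ(E) = ρ(E'), where ρ(F) = |F| / |⋃_{e∈F} e|. -/
/-- Density of an indexed family of hyperedges: number of hyperedges divided by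
the number of distinct nodes in their union. -/
noncomputable def densityIdx {α : Type*} [DecidableEq α] {n : ℕ}
    (e : Fin n → Finset α) : ℝ :=
  (n : ℝ) / ((Finset.univ.biUnion e).card : ℝ)

/-- The density measure fails the Sizes of Hyperedges axiom: there exist two equal-sized
families of nonempty hyperedges with unions of the same cardinality, where hyperedge sizes
are pointwise `≤` and strictly `<` at some index, yet the density values are equal. -/
theorem density_fails_sizes_axiom :
    ∃ (n : ℕ) (e e' : Fin n → Finset (Fin 10)),
      (∀ i, (e i).Nonempty) ∧ (∀ i, (e' i).Nonempty) ∧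
      (Finset.univ.biUnion e).card = (Finset.univ.biUnion e').card ∧
      (∀ i, (e i).card ≤ (e' i).card) ∧
      (∃ i, (e i).card < (e' i).card) ∧
      densityIdx e = densityIdx e' := by
  refine ⟨2, ![{0}, {1}], ![{0}, {0, 1}], ?_, ?_, ?_, ?_, ⟨1, ?_⟩, ?_⟩
  · intro i; fin_cases i <;> simp
  · intro i; fin_cases i <;> simp
  · decide
  · intro i; fin_cases i <;> decide
  · decide
  · unfold densityIdx
    norm_num [show (Finset.univ.biUnion ![({0} : Finset (Fin 10)), {1}]).card = 2 from by decide,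
      show (Finset.univ.biUnion ![({0} : Finset (Fin 10)), {0, 1}]).card = 2 from by decide]
end

section
/- The Jaccard index fails the Number of Hyperedges axiom: there exist families E ⊊ E' of hyperedges, all of the same size, with equal union cardinalities, such that J(E) ≥ J(E'), where J(F) = |⋂_{e∈F} e| / |⋃_{e∈F} e|. -/
/-- Jaccard index of a finite family of hyperedges. -/
noncomputable def jaccard {α : Type*} [DecidableEq α] [Fintype α]
    (F : Finset (Finset α)) : ℝ :=
  ((F.inf id).card : ℝ) / ((F.biUnion id).card : ℝ)

/-- The Jaccard index fails the Number of Hyperedges axiom: there exist families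
`E ⊊ E'` of nonempty hyperedges, all of the same size, with equal union cardinalities,
such that `J(E) ≥ J(E')`. -/
theorem jaccard_fails_num_hyperedges :
    ∃ (E E' : Finset (Finset (Fin 4))) (n : ℕ), 1 ≤ n ∧
      E ⊂ E' ∧ E.card < E'.card ∧
      (∀ e ∈ E', e.card = n) ∧
      (E.biUnion id).card = (E'.biUnion id).card ∧
      jaccard E' ≤ jaccard E := by
  refine ⟨{{0,1},{2,3}}, {{0,1},{2,3},{0,2}}, 2, ?_, ?_, ?_, ?_, ?_, ?_⟩
  · norm_num
  · decide
  · decide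
  · decide
  · decide
  · have h1 : (({{0,1},{2,3}} : Finset (Finset (Fin 4))).inf id).card = 0 := by decide
    have h2 : (({{0,1},{2,3},{0,2}} : Finset (Finset (Fin 4))).inf id).card = 0 := by decide
    simp [jaccard, h1, h2]
end
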